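/- arXiv:2510.00511 — 2 statements merged into one kernel-verified Lean document; each statement's English description precedes it below -/
import Mathlib

section
/- The multi-resolution limiter's troubled-cell decision is scale-invariant: for any k ≥ 1, any k-times continuously differentiable p : ℝ² → ℝ, any point (x₀,y₀), any A > 0, any real cell averages p̄₀, p̄₁, p̄₁₁, p̄₁₂, p̄₂, p̄₂₁, p̄₂₂, p̄₃, p̄₃₁, p̄₃₂, any constant C_k > 0, and any λ ≠ 0 and σ ∈ ℝ, the inequality IS^k ≤ C_k · IS⁰ holds for the transformed data (function λ·p + σ and cell averages λ·p̄ⱼ + σ) if and only if it holds for the original data. -/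
open Finset

/-- The substencil smoothness indicator
`IS_l = max(|p̄₀ − p̄_l|, |p̄₀ − p̄_{l1}|, |p̄₀ − p̄_{l2}|)`. -/
noncomputable def ISsub (p0 pl pl1 pl2 : ℝ) : ℝ :=
  max |p0 - pl| (max |p0 - pl1| |p0 - pl2|)

/-- The baseline smoothness indicator `IS⁰ = min(IS₁, IS₂, IS₃)`. -/
noncomputable def ISbase (p0 p1 p11 p12 p2 p21 p22 p3 p31 p32 : ℝ) : ℝ :=
  min (ISsub p0 p1 p11 p12) (min (ISsub p0 p2 p21 p22) (ISsub p0 p3 p31 p32))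

/-- Partial derivative with respect to the first variable. -/
noncomputable def pderivX (f : ℝ → ℝ → ℝ) : ℝ → ℝ → ℝ :=
  fun x y => deriv (fun x' => f x' y) x

/-- Partial derivative with respect to the second variable. -/
noncomputable def pderivY (f : ℝ → ℝ → ℝ) : ℝ → ℝ → ℝ :=
  fun x y => deriv (fun y' => f x y') y

/-- The mixed partial derivative `∂^{m+n} f / ∂x^m ∂y^n`. -/
noncomputable def mixedPartial (f : ℝ → ℝ → ℝ) (m n : ℕ) : ℝ → ℝ → ℝ :=
  pderivX^[m] (pderivY^[n] f)

/-- The cell smoothness indicator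
`IS^k(p) = A · Σ_{l=0}^{k} (1/((k−l)!·l!)) · |∂^k p / ∂x^{k−l}∂y^l (x₀, y₀)|`. -/
noncomputable def ISk (A : ℝ) (k : ℕ) (p : ℝ → ℝ → ℝ) (x0 y0 : ℝ) : ℝ :=
  A * ∑ l ∈ Finset.range (k + 1),
    (1 / ((Nat.factorial (k - l) : ℝ) * (Nat.factorial l : ℝ))) *
      |mixedPartial p (k - l) l x0 y0|

/-! Under `p ↦ λ p + σ` every ingredient of the decision is multiplied by `|λ|`: the shift
`σ` cancels in the differences of cell averages and in derivatives of order `k ≥ 1`, while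
`λ` factors out of absolute values, maxima and minima. Both sides of `IS^k ≤ C_k IS⁰` thus get
the factor `|λ| > 0`. -/

lemma pderivX_const_mul_add_const (c s : ℝ) (f : ℝ → ℝ → ℝ) :
    pderivX (fun x y => c * f x y + s) = fun x y => c * pderivX f x y := by
  funext x y
  simp [pderivX, deriv_const_mul_field]

lemma pderivY_const_mul_add_const (c s : ℝ) (f : ℝ → ℝ → ℝ) :
    pderivY (fun x y => c * f x y + s) = fun x y => c * pderivY f x y := by
  funext x y
  simp [pderivY, deriv_const_mul_field]

lemma iterate_pderivX_const_mul (n : ℕ) (c : ℝ) (f : ℝ → ℝ → ℝ) :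
    pderivX^[n] (fun x y => c * f x y) = fun x y => c * pderivX^[n] f x y := by
  have hcomm : Function.Commute (fun g x y => c * g x y) pderivX := fun g => by
    simpa using (pderivX_const_mul_add_const c 0 g).symm
  exact (hcomm.iterate_right n f).symm

lemma iterate_pderivY_const_mul (n : ℕ) (c : ℝ) (f : ℝ → ℝ → ℝ) :
    pderivY^[n] (fun x y => c * f x y) = fun x y => c * pderivY^[n] f x y := by
  have hcomm : Function.Commute (fun g x y => c * g x y) pderivY := fun g => by
    simpa using (pderivY_const_mul_add_const c 0 g).symm
  exact (hcomm.iterate_right n f).symm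

lemma mixedPartial_const_mul_add_const (c s : ℝ) (f : ℝ → ℝ → ℝ) {m n : ℕ} (hmn : m + n ≠ 0) :
    mixedPartial (fun x y => c * f x y + s) m n = fun x y => c * mixedPartial f m n x y := by
  unfold mixedPartial
  rcases n with _ | n
  · obtain ⟨m, rfl⟩ := Nat.exists_eq_succ_of_ne_zero hmn
    rw [Function.iterate_zero_apply, Function.iterate_succ_apply,
      pderivX_const_mul_add_const, iterate_pderivX_const_mul]
    rfl
  · rw [Function.iterate_succ_apply, pderivY_const_mul_add_const, iterate_pderivY_const_mul,
      iterate_pderivX_const_mul, Function.iterate_succ_apply]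

lemma ISk_const_mul_add_const (A : ℝ) {k : ℕ} (hk : k ≠ 0) (f : ℝ → ℝ → ℝ) (x0 y0 c s : ℝ) :
    ISk A k (fun x y => c * f x y + s) x0 y0 = |c| * ISk A k f x0 y0 := by
  rw [ISk, ISk, mul_left_comm |c| A, Finset.mul_sum (a := |c|)]
  refine congrArg (A * ·) (Finset.sum_congr rfl fun l hl => ?_)
  have hkl : k - l + l ≠ 0 := by
    rw [Finset.mem_range] at hl
    omega
  rw [mixedPartial_const_mul_add_const c s f hkl, abs_mul, mul_left_comm]

lemma abs_const_mul_add_const_sub (c s a b : ℝ) : |(c * a + s) - (c * b + s)| = |c| * |a - b| := by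
  rw [add_sub_add_right_eq_sub, ← mul_sub, abs_mul]

lemma ISsub_const_mul_add_const (c s p0 pl pl1 pl2 : ℝ) :
    ISsub (c * p0 + s) (c * pl + s) (c * pl1 + s) (c * pl2 + s) = |c| * ISsub p0 pl pl1 pl2 := by
  simp only [ISsub, abs_const_mul_add_const_sub, mul_max_of_nonneg _ _ (abs_nonneg c)]

lemma ISbase_const_mul_add_const (c s p0 p1 p11 p12 p2 p21 p22 p3 p31 p32 : ℝ) :
    ISbase (c * p0 + s) (c * p1 + s) (c * p11 + s) (c * p12 + s)
      (c * p2 + s) (c * p21 + s) (c * p22 + s) (c * p3 + s) (c * p31 + s) (c * p32 + s)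
      = |c| * ISbase p0 p1 p11 p12 p2 p21 p22 p3 p31 p32 := by
  simp only [ISbase, ISsub_const_mul_add_const, mul_min_of_nonneg _ _ (abs_nonneg c)]

theorem MR_limiter_decision_scale_invariant_general
    (k : ℕ) (hk : 1 ≤ k) (p : ℝ → ℝ → ℝ)
    (x0 y0 : ℝ) (A : ℝ)
    (p0 p1 p11 p12 p2 p21 p22 p3 p31 p32 : ℝ)
    (Ck : ℝ) (lam sig : ℝ) (hlam : lam ≠ 0) :
    (ISk A k (fun x y => lam * p x y + sig) x0 y0 ≤
        Ck * ISbase (lam * p0 + sig) (lam * p1 + sig) (lam * p11 + sig) (lam * p12 + sig)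
          (lam * p2 + sig) (lam * p21 + sig) (lam * p22 + sig)
          (lam * p3 + sig) (lam * p31 + sig) (lam * p32 + sig)) ↔
      ISk A k p x0 y0 ≤ Ck * ISbase p0 p1 p11 p12 p2 p21 p22 p3 p31 p32 := by
  rw [ISk_const_mul_add_const A (Nat.one_le_iff_ne_zero.mp hk), ISbase_const_mul_add_const,
    mul_left_comm Ck]
  exact mul_le_mul_iff_right₀ (abs_pos.mpr hlam)

/-- The multi-resolution limiter's troubled-cell decision `IS^k ≤ C_k · IS⁰` is
scale-invariant: it holds for the affinely transformed data (function `λ·p + σ`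
and cell averages `λ·p̄ⱼ + σ`, with `λ ≠ 0`) iff it holds for the original data. -/
theorem MR_limiter_decision_scale_invariant
    (k : ℕ) (hk : 1 ≤ k) (p : ℝ → ℝ → ℝ)
    (hp : ContDiff ℝ (k : ℕ∞) (fun q : ℝ × ℝ => p q.1 q.2))
    (x0 y0 : ℝ) (A : ℝ) (hA : 0 < A)
    (p0 p1 p11 p12 p2 p21 p22 p3 p31 p32 : ℝ)
    (Ck : ℝ) (hCk : 0 < Ck) (lam sig : ℝ) (hlam : lam ≠ 0) :
    (ISk A k (fun x y => lam * p x y + sig) x0 y0 ≤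
        Ck * ISbase (lam * p0 + sig) (lam * p1 + sig) (lam * p11 + sig) (lam * p12 + sig)
          (lam * p2 + sig) (lam * p21 + sig) (lam * p22 + sig)
          (lam * p3 + sig) (lam * p31 + sig) (lam * p32 + sig)) ↔
      ISk A k p x0 y0 ≤ Ck * ISbase p0 p1 p11 p12 p2 p21 p22 p3 p31 p32 :=
  MR_limiter_decision_scale_invariant_general k hk p x0 y0 A p0 p1 p11 p12 p2 p21 p22 p3 p31 p32 Ck
    lam sig hlam
end

section
/- A step discontinuity inside a one-dimensional substencil is detected at full jump strength independently of the mesh size: let h > 0, let K_i = [x_c + (i − j − 1/2)h, x_c + (i − j + 1/2)h] for i = j−2, j−1, j be three consecutive cells of length h, let u⁻ ≠ u⁺ be reals, let u(x) = u⁻ for x < s and u(x) = u⁺ for x ≥ s where s lies in the open interior of the cell K_{j−1}, and let ū_i = (1/h)∫_{K_i} u. Then IS_L := max(|ū_j − ū_{j−1}|, |ū_j − ū_{j−2}|) = |u⁺ − u⁻|. -/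
/-!
On a cell the jump does not meet, the average of `u` is its value there; on the cell
containing the jump it is the convex combination `θ u⁻ + (1 - θ) u⁺`, where `θ ∈ [0, 1]` is the
fraction of the cell left of `s`. Hence `ū_j - ū_{j-2} = u⁺ - u⁻`, while
`ū_j - ū_{j-1} = θ (u⁺ - u⁻)` is no larger in absolute value.
-/

open intervalIntegral Set

noncomputable def stepFun (s uL uR : ℝ) (x : ℝ) : ℝ := if x < s then uL else uR

section StepFun

variable {s uL uR : ℝ}

theorem stepFun_eqOn_Iio : EqOn (stepFun s uL uR) (fun _ ↦ uL) (Iio s) :=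
  fun _ hx ↦ if_pos hx

theorem stepFun_eqOn_Ici : EqOn (stepFun s uL uR) (fun _ ↦ uR) (Ici s) :=
  fun _ hx ↦ if_neg (not_lt.2 hx)

theorem stepFun_monotone (h : uL ≤ uR) : Monotone (stepFun s uL uR) := by
  intro x y hxy
  unfold stepFun
  split_ifs <;> linarith

theorem stepFun_antitone (h : uR ≤ uL) : Antitone (stepFun s uL uR) := by
  intro x y hxy
  unfold stepFun
  split_ifs <;> linarith

theorem intervalIntegrable_stepFun (a b : ℝ) :
    IntervalIntegrable (stepFun s uL uR) MeasureTheory.volume a b := by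
  rcases le_total uL uR with h | h
  · exact (stepFun_monotone h).intervalIntegrable
  · exact (stepFun_antitone h).intervalIntegrable

theorem integral_stepFun_of_le {a b : ℝ} (hab : a ≤ b) (hb : b ≤ s) :
    ∫ x in a..b, stepFun s uL uR x = (b - a) * uL := by
  rw [integral_congr_Ioo_of_le hab (stepFun_eqOn_Iio.mono fun x hx ↦ hx.2.trans_le hb)]
  simp [mul_comm]

theorem integral_stepFun_of_ge {a b : ℝ} (ha : s ≤ a) (hab : a ≤ b) :
    ∫ x in a..b, stepFun s uL uR x = (b - a) * uR := by
  rw [integral_congr_Ioo_of_le hab (stepFun_eqOn_Ici.mono fun x hx ↦ ha.trans hx.1.le)]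
  simp [mul_comm]

theorem integral_stepFun_of_mem_Icc {a b : ℝ} (ha : a ≤ s) (hb : s ≤ b) :
    ∫ x in a..b, stepFun s uL uR x = (s - a) * uL + (b - s) * uR := by
  rw [← integral_add_adjacent_intervals (intervalIntegrable_stepFun a s)
    (intervalIntegrable_stepFun s b), integral_stepFun_of_le ha le_rfl,
    integral_stepFun_of_ge le_rfl hb]

end StepFun

theorem step_discontinuity_full_jump_general
    (h xc s um up : ℝ) (hh : 0 < h)
    (hs1 : xc - 3 / 2 * h < s) (hs2 : s < xc - 1 / 2 * h)
    (u : ℝ → ℝ) (hu : ∀ x, u x = if x < s then um else up)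
    (ubarj ubarjm1 ubarjm2 : ℝ)
    (hj : ubarj = (1 / h) * ∫ x in (xc - 1 / 2 * h)..(xc + 1 / 2 * h), u x)
    (hjm1 : ubarjm1 = (1 / h) * ∫ x in (xc - 3 / 2 * h)..(xc - 1 / 2 * h), u x)
    (hjm2 : ubarjm2 = (1 / h) * ∫ x in (xc - 5 / 2 * h)..(xc - 3 / 2 * h), u x) :
    max |ubarj - ubarjm1| |ubarj - ubarjm2| = |up - um| := by
  obtain rfl : u = stepFun s um up := funext hu
  have hj_eq : ubarj = up := by
    rw [hj, integral_stepFun_of_ge hs2.le (by linarith)]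
    field_simp
    ring
  have hjm2_eq : ubarjm2 = um := by
    rw [hjm2, integral_stepFun_of_le (by linarith) hs1.le]
    field_simp
    ring
  set θ := (s - (xc - 3 / 2 * h)) / h with hθ
  have hjm1_diff : ubarj - ubarjm1 = θ * (up - um) := by
    rw [hjm1, integral_stepFun_of_mem_Icc hs1.le hs2.le, hj_eq, hθ]
    field_simp
    ring
  have hθ_nonneg : 0 ≤ θ := div_nonneg (by linarith) hh.le
  have hθ_le_one : θ ≤ 1 := (div_le_one hh).2 (by linarith)
  rw [hjm1_diff, hj_eq, hjm2_eq, abs_mul, abs_of_nonneg hθ_nonneg]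
  exact max_eq_right (mul_le_of_le_one_left (abs_nonneg _) hθ_le_one)

/-- A step discontinuity located in the interior of the middle cell `K_{j−1}` of a
one-dimensional substencil `{K_{j−2}, K_{j−1}, K_j}` of uniform cells of length `h`
is detected at full jump strength, independently of the mesh size:
`IS_L = max(|ū_j − ū_{j−1}|, |ū_j − ū_{j−2}|) = |u⁺ − u⁻|`. -/
theorem step_discontinuity_full_jump
    (h xc s um up : ℝ) (hh : 0 < h) (hne : um ≠ up)
    (hs1 : xc - 3 / 2 * h < s) (hs2 : s < xc - 1 / 2 * h)
    (u : ℝ → ℝ) (hu : ∀ x, u x = if x < s then um else up)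
    (ubarj ubarjm1 ubarjm2 : ℝ)
    (hj : ubarj = (1 / h) * ∫ x in (xc - 1 / 2 * h)..(xc + 1 / 2 * h), u x)
    (hjm1 : ubarjm1 = (1 / h) * ∫ x in (xc - 3 / 2 * h)..(xc - 1 / 2 * h), u x)
    (hjm2 : ubarjm2 = (1 / h) * ∫ x in (xc - 5 / 2 * h)..(xc - 3 / 2 * h), u x) :
    max |ubarj - ubarjm1| |ubarj - ubarjm2| = |up - um| :=
  step_discontinuity_full_jump_general h xc s um up hh hs1 hs2 u hu ubarj ubarjm1 ubarjm2 hj hjm1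
    hjm2
end
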